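/- arXiv:0806.3033 — 3 statements merged into one kernel-verified Lean document; each statement's English description precedes it below -/
import Mathlib

section
/- The set of losing paths for conjunctive compound Node-Kayles on paths under normal play is exactly {P_0, P_4, P_5, P_9, P_10}; i.e., the second player wins on P_n if and only if n ∈ {0, 4, 5, 9, 10}. -/
/-- The options of a single path `P n` in Node-Kayles, each given as a multiset of
resulting path lengths.  A resulting empty path is recorded as `0`, which marks an
ended component.  `P 1` and `P 2` only move to the (ended) empty path. -/
def pathOptions (n : ℕ) : Set (Multiset ℕ) :=
  if n = 0 then ∅
  else if n ≤ 2 then {({0} : Multiset ℕ)}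
  else {({n - 2} : Multiset ℕ), ({n - 3} : Multiset ℕ)} ∪
    {m | ∃ i j : ℕ, 1 ≤ i ∧ i ≤ j ∧ i + j = n - 3 ∧ m = ({i, j} : Multiset ℕ)}

/-- A conjunctive move: play one Node-Kayles move simultaneously in every component. -/
inductive ConjMove : Multiset ℕ → Multiset ℕ → Prop
  | single {n : ℕ} {h : Multiset ℕ} : h ∈ pathOptions n → ConjMove {n} h
  | cons {n : ℕ} {h G H : Multiset ℕ} :
      h ∈ pathOptions n → ConjMove G H → ConjMove (n ::ₘ G) (h + H)

/-- A position is ended (for the short ending rule) when it is empty or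
some component has ended. -/
def Ended (G : Multiset ℕ) : Prop := G = 0 ∨ 0 ∈ G

/-!
The remoteness of a single path `P_n` is `0, 1, 1, 1, 2, 2, 3, 3, 3, 4, 4` for `n ≤ 10` and `3`
for `n ≥ 11`.  A position containing a path with at most three vertices can be ended in one move,
so it has remoteness 1; the small values then follow option by option (splitting `P_9` or `P_10`
into two paths always leaves one with at most three vertices).  For `n ≥ 11` the move to
`P_4 + P_(n-7)` reaches remoteness 2, since every move in `P_4` leaves a path with at most two
vertices; as no option of `P_n` is ended, `R(P_n) = 3`.
-/

lemma mem_pathOptions_iff {n : ℕ} (hn : 3 ≤ n) {h : Multiset ℕ} :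
    h ∈ pathOptions n ↔ h = {n - 2} ∨ h = {n - 3} ∨
      ∃ i j : ℕ, 1 ≤ i ∧ i ≤ j ∧ i + j = n - 3 ∧ h = {i, j} := by
  rw [pathOptions, if_neg (by omega), if_neg (by omega)]
  simp only [Set.mem_union, Set.mem_insert_iff, Set.mem_singleton_iff, Set.mem_ofPred_eq, or_assoc]

lemma zero_mem_pathOptions {n : ℕ} (h1 : 1 ≤ n) (h3 : n ≤ 3) : {0} ∈ pathOptions n := by
  by_cases h2 : n ≤ 2
  · rw [pathOptions, if_neg (by omega), if_pos h2]; rfl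
  · obtain rfl : n = 3 := by omega
    exact (mem_pathOptions_iff le_rfl).2 (Or.inr (Or.inl rfl))

lemma pathOptions_nonempty {n : ℕ} (hn : n ≠ 0) : (pathOptions n).Nonempty := by
  by_cases h3 : n ≤ 3
  · exact ⟨_, zero_mem_pathOptions (by omega) h3⟩
  · exact ⟨_, (mem_pathOptions_iff (by omega)).2 (Or.inl rfl)⟩

lemma not_ended_of_mem_pathOptions {n : ℕ} (hn : 4 ≤ n) {h : Multiset ℕ}
    (hh : h ∈ pathOptions n) : ¬ Ended h := by
  rcases (mem_pathOptions_iff (by omega)).1 hh with rfl | rfl | ⟨i, j, hi, hij, -, rfl⟩ <;>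
    simp [Ended] <;> omega

lemma not_ended_singleton {n : ℕ} (hn : n ≠ 0) : ¬ Ended {n} := by
  simp [Ended, hn.symm]

lemma not_ended_add {G H : Multiset ℕ} (hG : ¬ Ended G) (hH : ¬ Ended H) : ¬ Ended (G + H) := by
  simp only [Ended, not_or, Multiset.mem_add, add_eq_zero] at hG hH ⊢
  tauto

namespace ConjMove

lemma ne_zero_left {G H : Multiset ℕ} (m : ConjMove G H) : G ≠ 0 := by
  cases m <;> simp

lemma exists_le {G H : Multiset ℕ} (m : ConjMove G H) {n : ℕ} (hn : n ∈ G) :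
    ∃ h ∈ pathOptions n, h ≤ H := by
  induction m with
  | single hh =>
    rw [Multiset.mem_singleton.1 hn]
    exact ⟨_, hh, le_rfl⟩
  | cons hh _ ih =>
    rcases Multiset.mem_cons.1 hn with rfl | hn
    · exact ⟨_, hh, Multiset.le_add_right _ _⟩
    · obtain ⟨h, hh', hle⟩ := ih hn
      exact ⟨h, hh', hle.trans (Multiset.le_add_left _ _)⟩

lemma not_ended {G H : Multiset ℕ} (m : ConjMove G H) (hG : ∀ n ∈ G, 4 ≤ n) : ¬ Ended H := by
  induction m with
  | single hh => exact not_ended_of_mem_pathOptions (hG _ (Multiset.mem_singleton_self _)) hh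
  | cons hh _ ih =>
    exact not_ended_add (not_ended_of_mem_pathOptions (hG _ (Multiset.mem_cons_self _ _)) hh)
      (ih fun n hn => hG n (Multiset.mem_cons_of_mem hn))

end ConjMove

lemma conjMove_singleton_iff {n : ℕ} {H : Multiset ℕ} : ConjMove {n} H ↔ H ∈ pathOptions n := by
  refine ⟨fun m => ?_, ConjMove.single⟩
  generalize hG : ({n} : Multiset ℕ) = G at m
  cases m with
  | single hh => rwa [Multiset.singleton_inj.1 hG]
  | cons _ m' => exact absurd (by simpa using congrArg Multiset.card hG) m'.ne_zero_left

lemma conjMove_singleton_sub_two {n : ℕ} (hn : 3 ≤ n) : ConjMove {n} {n - 2} :=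
  conjMove_singleton_iff.2 ((mem_pathOptions_iff hn).2 (Or.inl rfl))

lemma conjMove_singleton_sub_three {n : ℕ} (hn : 3 ≤ n) : ConjMove {n} {n - 3} :=
  conjMove_singleton_iff.2 ((mem_pathOptions_iff hn).2 (Or.inr (Or.inl rfl)))

lemma exists_conjMove {G : Multiset ℕ} (hG : ¬ Ended G) : ∃ H, ConjMove G H := by
  induction G using Multiset.induction with
  | empty => exact absurd (Or.inl rfl) hG
  | cons a s ih =>
    obtain ⟨h, hh⟩ := pathOptions_nonempty fun ha => hG (Or.inr (ha ▸ Multiset.mem_cons_self a s))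
    by_cases hs : s = 0
    · subst hs; exact ⟨h, .single hh⟩
    · obtain ⟨H, hH⟩ := ih fun he => hG (Or.inr (Multiset.mem_cons_of_mem (he.resolve_left hs)))
      exact ⟨h + H, .cons hh hH⟩

lemma exists_conjMove_add {G : Multiset ℕ} (hG : ¬ Ended G) {x : ℕ} (hx : x ∈ G)
    {h : Multiset ℕ} (hh : h ∈ pathOptions x) : ∃ H, ConjMove G (h + H) := by
  rw [← Multiset.cons_erase hx]
  by_cases hs : G.erase x = 0
  · exact ⟨0, by simpa [hs] using ConjMove.single hh⟩
  · obtain ⟨H, hH⟩ := exists_conjMove fun he =>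
      hG (Or.inr (Multiset.mem_of_mem_erase (he.resolve_left hs)))
    exact ⟨H, .cons hh hH⟩

structure IsConjRemoteness (R : Multiset ℕ → ℕ) : Prop where
  eq_zero_of_ended : ∀ G, Ended G → R G = 0
  eq_of_exists_even : ∀ G, ¬ Ended G → (∃ H, ConjMove G H ∧ Even (R H)) →
    R G = 1 + sInf {r | Even r ∧ ∃ H, ConjMove G H ∧ R H = r}
  eq_of_not_exists_even : ∀ G, ¬ Ended G → ¬ (∃ H, ConjMove G H ∧ Even (R H)) →
    R G = 1 + sSup {r | Odd r ∧ ∃ H, ConjMove G H ∧ R H = r}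

namespace IsConjRemoteness

variable {R : Multiset ℕ → ℕ} {G H : Multiset ℕ} {r : ℕ}

lemma eq_succ_of_least_even (hR : IsConjRemoteness R) (hG : ¬ Ended G) (hr : Even r)
    (hH : ConjMove G H) (hRH : R H = r)
    (hmin : ∀ H', ConjMove G H' → Even (R H') → r ≤ R H') : R G = r + 1 := by
  have hleast : IsLeast {r | Even r ∧ ∃ H, ConjMove G H ∧ R H = r} r :=
    ⟨⟨hr, H, hH, hRH⟩, by rintro _ ⟨he, H', hH', rfl⟩; exact hmin H' hH' he⟩
  rw [hR.eq_of_exists_even G hG ⟨H, hH, hRH ▸ hr⟩, hleast.csInf_eq, add_comm]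

lemma eq_succ_of_forall_odd (hR : IsConjRemoteness R) (hG : ¬ Ended G)
    (hodd : ∀ H', ConjMove G H' → Odd (R H')) (hH : ConjMove G H) (hRH : R H = r)
    (hmax : ∀ H', ConjMove G H' → R H' ≤ r) : R G = r + 1 := by
  have hgreatest : IsGreatest {r | Odd r ∧ ∃ H, ConjMove G H ∧ R H = r} r :=
    ⟨⟨hRH ▸ hodd H hH, H, hH, hRH⟩, by rintro _ ⟨-, H', hH', rfl⟩; exact hmax H' hH'⟩
  have hno_even : ¬ ∃ H', ConjMove G H' ∧ Even (R H') := fun ⟨H', hH', he⟩ =>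
    Nat.not_even_iff_odd.2 (hodd H' hH') he
  rw [hR.eq_of_not_exists_even G hG hno_even, hgreatest.csSup_eq, add_comm]

lemma one_le (hR : IsConjRemoteness R) (hG : ¬ Ended G) : 1 ≤ R G := by
  by_cases h : ∃ H, ConjMove G H ∧ Even (R H)
  · rw [hR.eq_of_exists_even G hG h]; omega
  · rw [hR.eq_of_not_exists_even G hG h]; omega

lemma eq_one_of_mem_le_three (hR : IsConjRemoteness R) (hG : ¬ Ended G) {x : ℕ} (hx : x ∈ G)
    (hx3 : x ≤ 3) : R G = 1 := by
  have hx1 : 1 ≤ x := Nat.one_le_iff_ne_zero.2 fun h => hG (Or.inr (h ▸ hx))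
  obtain ⟨H, hH⟩ := exists_conjMove_add hG hx (zero_mem_pathOptions hx1 hx3)
  exact hR.eq_succ_of_least_even hG Even.zero hH (hR.eq_zero_of_ended _ (Or.inr (by simp)))
    fun _ _ _ => Nat.zero_le _

lemma eq_two_of_forall_eq_one (hR : IsConjRemoteness R) (hG : ¬ Ended G)
    (h1 : ∀ H, ConjMove G H → R H = 1) : R G = 2 := by
  obtain ⟨H, hH⟩ := exists_conjMove hG
  exact hR.eq_succ_of_forall_odd hG (fun H' hH' => h1 H' hH' ▸ odd_one) hH (h1 H hH)
    fun H' hH' => (h1 H' hH').le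

lemma eq_three_of_eq_two (hR : IsConjRemoteness R) (hG : ¬ Ended G)
    (hne : ∀ H', ConjMove G H' → ¬ Ended H') (hH : ConjMove G H) (h2 : R H = 2) :
    R G = 3 := by
  refine hR.eq_succ_of_least_even hG even_two hH h2 fun H' hH' he => ?_
  have := hR.one_le (hne H' hH')
  obtain ⟨k, hk⟩ := he
  omega

lemma singleton_eq_one (hR : IsConjRemoteness R) {n : ℕ} (h1 : 1 ≤ n) (h3 : n ≤ 3) :
    R {n} = 1 :=
  hR.eq_one_of_mem_le_three (not_ended_singleton (by omega)) (Multiset.mem_singleton_self n) h3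

lemma pair_eq_one (hR : IsConjRemoteness R) {i j : ℕ} (hi : 1 ≤ i) (hi3 : i ≤ 3) (hj : 1 ≤ j) :
    R {i, j} = 1 :=
  hR.eq_one_of_mem_le_three (by simp [Ended]; omega) (by simp) hi3

lemma insert_four_eq_two (hR : IsConjRemoteness R) {m : ℕ} (hm : 4 ≤ m) : R {4, m} = 2 := by
  have h4m : ∀ n ∈ ({4, m} : Multiset ℕ), 4 ≤ n := by simp [hm]
  refine hR.eq_two_of_forall_eq_one (by simp [Ended]; omega) fun H hH => ?_
  obtain ⟨h, hh, hle⟩ := hH.exists_le (by simp : 4 ∈ ({4, m} : Multiset ℕ))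
  obtain ⟨x, hx, hx3⟩ : ∃ x ∈ H, x ≤ 3 := by
    rcases (mem_pathOptions_iff (by norm_num)).1 hh with rfl | rfl | ⟨i, j, hi, hij, hs, -⟩
    · exact ⟨2, Multiset.mem_of_le hle (by simp), by norm_num⟩
    · exact ⟨1, Multiset.mem_of_le hle (by simp), by norm_num⟩
    · omega
  exact hR.eq_one_of_mem_le_three (hH.not_ended h4m) hx hx3

lemma singleton_eq_two (hR : IsConjRemoteness R) {n : ℕ} (h4 : 4 ≤ n) (h5 : n ≤ 5) :
    R {n} = 2 := by
  refine hR.eq_two_of_forall_eq_one (not_ended_singleton (by omega)) fun H hH => ?_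
  rcases (mem_pathOptions_iff (by omega)).1 (conjMove_singleton_iff.1 hH) with
    rfl | rfl | ⟨i, j, hi, hij, hs, rfl⟩
  · exact hR.singleton_eq_one (by omega) (by omega)
  · exact hR.singleton_eq_one (by omega) (by omega)
  · exact hR.pair_eq_one hi (by omega) (by omega)

lemma singleton_eq_three_of_le_eight (hR : IsConjRemoteness R) {n : ℕ} (h6 : 6 ≤ n)
    (h8 : n ≤ 8) : R {n} = 3 := by
  have hne : ∀ H, ConjMove {n} H → ¬ Ended H := fun _ hH => hH.not_ended (by simp; omega)
  rcases (by omega : n ≤ 7 ∨ n = 8) with h7 | rfl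
  · exact hR.eq_three_of_eq_two (not_ended_singleton (by omega)) hne
      (conjMove_singleton_sub_two (by omega))
      (hR.singleton_eq_two (by omega) (by omega))
  · exact hR.eq_three_of_eq_two (not_ended_singleton (by omega)) hne
      (conjMove_singleton_sub_three (by omega))
      (hR.singleton_eq_two (by omega) (by omega))

lemma singleton_eq_four (hR : IsConjRemoteness R) {n : ℕ} (h9 : 9 ≤ n) (h10 : n ≤ 10) :
    R {n} = 4 := by
  have hopt : ∀ H, ConjMove {n} H → R H = 1 ∨ R H = 3 := fun H hH => by
    rcases (mem_pathOptions_iff (by omega)).1 (conjMove_singleton_iff.1 hH) with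
      rfl | rfl | ⟨i, j, hi, hij, hs, rfl⟩
    · exact .inr (hR.singleton_eq_three_of_le_eight (by omega) (by omega))
    · exact .inr (hR.singleton_eq_three_of_le_eight (by omega) (by omega))
    · exact .inl (hR.pair_eq_one hi (by omega) (by omega))
  refine hR.eq_succ_of_forall_odd (not_ended_singleton (by omega))
    (fun H hH => by rcases hopt H hH with h | h <;> rw [h] <;> decide)
    (conjMove_singleton_sub_two (by omega))
    (hR.singleton_eq_three_of_le_eight (by omega) (by omega))
    (fun H hH => by rcases hopt H hH with h | h <;> omega)

lemma singleton_eq_three_of_eleven_le (hR : IsConjRemoteness R) {n : ℕ} (h11 : 11 ≤ n) :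
    R {n} = 3 :=
  hR.eq_three_of_eq_two (not_ended_singleton (by omega))
    (fun _ hH => hH.not_ended (by simp; omega))
    (conjMove_singleton_iff.2 ((mem_pathOptions_iff (by omega)).2
      (Or.inr (Or.inr ⟨4, n - 7, by omega, by omega, by omega, rfl⟩))))
    (hR.insert_four_eq_two (by omega))

end IsConjRemoteness

theorem conjunctive_losing_paths_normal (R : Multiset ℕ → ℕ)
    (hend : ∀ G, Ended G → R G = 0)
    (heven : ∀ G, ¬ Ended G → (∃ H, ConjMove G H ∧ Even (R H)) →
      R G = 1 + sInf {r | Even r ∧ ∃ H, ConjMove G H ∧ R H = r})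
    (hodd : ∀ G, ¬ Ended G → ¬ (∃ H, ConjMove G H ∧ Even (R H)) →
      R G = 1 + sSup {r | Odd r ∧ ∃ H, ConjMove G H ∧ R H = r}) :
    ∀ n : ℕ, Even (R {n}) ↔ n ∈ ({0, 4, 5, 9, 10} : Set ℕ) := by
  have hR : IsConjRemoteness R := ⟨hend, heven, hodd⟩
  intro n
  simp only [Set.mem_insert_iff, Set.mem_singleton_iff]
  rcases (by omega : n = 0 ∨ (1 ≤ n ∧ n ≤ 3) ∨ (4 ≤ n ∧ n ≤ 5) ∨ (6 ≤ n ∧ n ≤ 8) ∨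
    (9 ≤ n ∧ n ≤ 10) ∨ 11 ≤ n) with rfl | ⟨h, h'⟩ | ⟨h, h'⟩ | ⟨h, h'⟩ | ⟨h, h'⟩ | h
  · simp [hend {0} (Or.inr (Multiset.mem_singleton_self 0))]
  · rw [hR.singleton_eq_one h h', Nat.even_iff]; omega
  · rw [hR.singleton_eq_two h h', Nat.even_iff]; omega
  · rw [hR.singleton_eq_three_of_le_eight h h', Nat.even_iff]; omega
  · rw [hR.singleton_eq_four h h', Nat.even_iff]; omega
  · rw [hR.singleton_eq_three_of_eleven_le h, Nat.even_iff]; omega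
end

section
/- Let S⁻ be the misère suspense number for continued conjunctive compound Node-Kayles on paths: S⁻(empty)=0; S⁻(G) = 1 + max{odd suspense numbers of options} if some option has odd suspense number, otherwise 1 + min{even suspense numbers of options}; and S⁻(P_i ∪ P_j) = max(S⁻(P_i), S⁻(P_j)). Then S⁻ is increasing on paths and for every n ≥ 0: S⁻(P_{7·2^n − 6}) = S⁻(P_{7·2^n − 5}) = 2n+1, and S⁻(P_k) = 2n+2 for every k with 7·2^n − 4 ≤ k ≤ 7·2^{n+1} − 7. -/
/-!
The suspense numbers are given by the closed form `closedSuspense`, which is monotone.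
Monotonicity makes the value `max (S i) (S j)` of `P i ∪ P j` equal to `S j`, so the option
values of `P n` (`n ≥ 3`) are exactly the values of `S` on `[(n - 2) / 2, n - 2]`. For `n` in
`{7·2^m - 6, 7·2^m - 5}` this whole interval lies in the preceding even block, so every option
has the even value `2m` and `S n = 2m + 1`; for `n` in the even block `[7·2^m - 4, 7·2^(m+1) - 7]`
the interval reaches back to a point with value `2m + 1` and no odd value is larger, so
`S n = 2m + 2`. Since the recursion determines `S` by strong induction, `S` is the closed form.
-/

/-- The values, under a valuation `f` of paths (with `f 0` the value of the empty
position), of the options of the path `P n` in Node-Kayles, where the value of a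
disjoint union `P i ∪ P j` is `max (f i) (f j)`.  For `n = 1, 2` the only option
is the empty position; for `n ≥ 3` the options are `P (n-2)`, `P (n-3)` and the
unions `P i ∪ P j` with `j ≥ i ≥ 1`, `i + j = n - 3`. -/
def optValues (f : ℕ → ℕ) (n : ℕ) : Set ℕ :=
  if n ≤ 2 then {f 0}
  else {f (n - 2), f (n - 3)} ∪
    {v | ∃ i j : ℕ, 1 ≤ i ∧ i ≤ j ∧ i + j = n - 3 ∧ v = max (f i) (f j)}

open Classical in
/-- The misère suspense number of a position whose options have the suspense numbers `V`. -/
noncomputable def suspenseStep (V : Set ℕ) : ℕ :=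
  if ∃ v ∈ V, Odd v then 1 + sSup {v ∈ V | Odd v} else 1 + sInf {v ∈ V | Even v}

lemma suspenseStep_singleton {e : ℕ} (he : Even e) : suspenseStep {e} = 1 + e := by
  have hsep : {v ∈ ({e} : Set ℕ) | Even v} = {e} :=
    Set.sep_eq_self_iff_mem_true.2 fun v hv => (Set.mem_singleton_iff.1 hv) ▸ he
  rw [suspenseStep, if_neg (by simpa using Nat.not_odd_iff_even.2 he), hsep, csInf_singleton]

lemma suspenseStep_of_isGreatest {V : Set ℕ} {o : ℕ} (h : IsGreatest {v ∈ V | Odd v} o) :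
    suspenseStep V = 1 + o := by
  rw [suspenseStep, if_pos ⟨o, h.1⟩, h.csSup_eq]

lemma optValues_congr {f g : ℕ → ℕ} {n : ℕ} (hn : 1 ≤ n) (h : ∀ k < n, f k = g k) :
    optValues f n = optValues g n := by
  unfold optValues
  split_ifs
  · rw [h 0 hn]
  · rw [h (n - 2) (by omega), h (n - 3) (by omega)]
    congr 1
    ext v
    constructor
    · rintro ⟨i, j, hi, hij, hs, rfl⟩
      exact ⟨i, j, hi, hij, hs, by rw [h i (by omega), h j (by omega)]⟩
    · rintro ⟨i, j, hi, hij, hs, rfl⟩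
      exact ⟨i, j, hi, hij, hs, by rw [h i (by omega), h j (by omega)]⟩

lemma eq_of_suspenseStep {S T : ℕ → ℕ} (h0 : S 0 = T 0)
    (hS : ∀ n, 1 ≤ n → S n = suspenseStep (optValues S n))
    (hT : ∀ n, 1 ≤ n → T n = suspenseStep (optValues T n)) : S = T := by
  funext n
  induction n using Nat.strong_induction_on with
  | _ n ih =>
    rcases Nat.eq_zero_or_pos n with rfl | hn
    · exact h0
    · rw [hS n hn, hT n hn, optValues_congr hn ih]

lemma optValues_of_monotone {f : ℕ → ℕ} (hf : Monotone f) {n : ℕ} (hn : 3 ≤ n) :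
    optValues f n = f '' Set.Icc ((n - 2) / 2) (n - 2) := by
  rw [optValues, if_neg (by omega)]
  ext v
  simp only [Set.mem_union, Set.mem_insert_iff, Set.mem_singleton_iff, Set.mem_ofPred_eq,
    Set.mem_image, Set.mem_Icc]
  constructor
  · rintro ((rfl | rfl) | ⟨i, j, hi, hij, hs, rfl⟩)
    · exact ⟨n - 2, ⟨by omega, le_rfl⟩, rfl⟩
    · exact ⟨n - 3, ⟨by omega, by omega⟩, rfl⟩
    · exact ⟨j, ⟨by omega, by omega⟩, (max_eq_right (hf hij)).symm⟩
  · rintro ⟨k, ⟨hk1, hk2⟩, rfl⟩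
    rcases lt_or_ge k (n - 3) with hk | hk
    · exact Or.inr ⟨n - 3 - k, k, by omega, by omega, by omega,
        (max_eq_right (hf (by omega : n - 3 - k ≤ k))).symm⟩
    · rcases lt_or_ge k (n - 2) with hk' | hk'
      · exact Or.inl (Or.inr (by congr 1; omega))
      · exact Or.inl (Or.inl (by congr 1; omega))

lemma Nat.size_eq_succ_of_le_of_lt {x k : ℕ} (h1 : 2 ^ k ≤ x) (h2 : x < 2 ^ (k + 1)) :
    x.size = k + 1 :=
  le_antisymm (Nat.size_le.2 h2) (Nat.lt_size.2 h1)

lemma Nat.size_two_pow_sub_one (m : ℕ) : (2 ^ m - 1).size = m := by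
  cases m with
  | zero => rfl
  | succ m =>
    have := Nat.one_le_two_pow (n := m)
    exact Nat.size_eq_succ_of_le_of_lt (by rw [pow_succ]; omega) (by omega)

lemma exists_mem_block {n : ℕ} (hn : 1 ≤ n) :
    ∃ m, 7 * 2 ^ m - 6 ≤ n ∧ n ≤ 7 * 2 ^ (m + 1) - 7 := by
  have h1 := Nat.pow_log_le_self 2 (by omega : (n + 6) / 7 ≠ 0)
  have h2 := Nat.lt_pow_succ_log_self (by norm_num : 1 < 2) ((n + 6) / 7)
  rw [Nat.le_div_iff_mul_le (by norm_num)] at h1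
  rw [Nat.div_lt_iff_lt_mul (by norm_num), pow_succ] at h2
  exact ⟨Nat.log 2 ((n + 6) / 7), by omega, by rw [pow_succ]; omega⟩

/-- On `[7·2^m - 4, 7·2^(m+1) - 7]` both bit lengths equal `m + 1`; on `{7·2^m - 6, 7·2^m - 5}`
the second one drops to `m`. -/
def closedSuspense (n : ℕ) : ℕ :=
  ((n + 6) / 7).size + ((n + 4) / 7).size

lemma closedSuspense_monotone : Monotone closedSuspense := fun _ _ h =>
  add_le_add (Nat.size_le_size (Nat.div_le_div_right (by omega)))
    (Nat.size_le_size (Nat.div_le_div_right (by omega)))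

lemma closedSuspense_eq_odd {m n : ℕ} (h1 : 7 * 2 ^ m - 6 ≤ n) (h2 : n ≤ 7 * 2 ^ m - 5) :
    closedSuspense n = 2 * m + 1 := by
  have := Nat.one_le_two_pow (n := m)
  rw [closedSuspense, (by omega : (n + 6) / 7 = 2 ^ m), (by omega : (n + 4) / 7 = 2 ^ m - 1),
    Nat.size_pow, Nat.size_two_pow_sub_one]
  ring

lemma closedSuspense_eq_even {m n : ℕ} (h1 : 7 * 2 ^ m - 4 ≤ n)
    (h2 : n ≤ 7 * 2 ^ (m + 1) - 7) : closedSuspense n = 2 * m + 2 := by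
  have := Nat.one_le_two_pow (n := m)
  rw [pow_succ] at h2
  rw [closedSuspense, Nat.size_eq_succ_of_le_of_lt (k := m) (by omega) (by rw [pow_succ]; omega),
    Nat.size_eq_succ_of_le_of_lt (k := m) (by omega) (by rw [pow_succ]; omega)]
  ring

lemma closedSuspense_image_of_odd {m n : ℕ} (h1 : 7 * 2 ^ (m + 1) - 6 ≤ n)
    (h2 : n ≤ 7 * 2 ^ (m + 1) - 5) :
    closedSuspense '' Set.Icc ((n - 2) / 2) (n - 2) = {2 * m + 2} := by
  have := Nat.one_le_two_pow (n := m)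
  rw [pow_succ] at h1 h2
  refine Set.eq_singleton_iff_unique_mem.2 ⟨⟨n - 2, ⟨by omega, le_rfl⟩, ?_⟩, ?_⟩
  · exact closedSuspense_eq_even (by omega) (by rw [pow_succ]; omega)
  · rintro _ ⟨k, ⟨hk1, hk2⟩, rfl⟩
    exact closedSuspense_eq_even (by omega) (by rw [pow_succ]; omega)

lemma isGreatest_odd_closedSuspense_image_of_even {m n : ℕ} (h1 : 7 * 2 ^ m - 4 ≤ n)
    (h2 : n ≤ 7 * 2 ^ (m + 1) - 7) :
    IsGreatest {v ∈ closedSuspense '' Set.Icc ((n - 2) / 2) (n - 2) | Odd v} (2 * m + 1) := by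
  have := Nat.one_le_two_pow (n := m)
  rw [pow_succ] at h2
  -- an option in `{7·2^m - 6, 7·2^m - 5}`
  set k₀ := max ((n - 2) / 2) (7 * 2 ^ m - 6)
  have hk₀ : closedSuspense k₀ = 2 * m + 1 :=
    closedSuspense_eq_odd (le_max_right _ _) (max_le (by omega) (by omega))
  have hk₀_mem : k₀ ∈ Set.Icc ((n - 2) / 2) (n - 2) :=
    ⟨le_max_left _ _, max_le (by omega) (by omega)⟩
  refine ⟨⟨⟨k₀, hk₀_mem, hk₀⟩, odd_two_mul_add_one m⟩, ?_⟩
  rintro _ ⟨⟨k, ⟨-, hk⟩, rfl⟩, hodd⟩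
  have hle : closedSuspense k ≤ 2 * m + 2 :=
    (closedSuspense_monotone (by omega : k ≤ 7 * 2 ^ (m + 1) - 7)).trans_eq
      (closedSuspense_eq_even (by rw [pow_succ]; omega) le_rfl)
  rcases hodd with ⟨c, hc⟩
  omega

lemma closedSuspense_eq_suspenseStep {n : ℕ} (hn : 1 ≤ n) :
    closedSuspense n = suspenseStep (optValues closedSuspense n) := by
  rcases le_or_gt n 2 with h2 | h3
  · rw [optValues, if_pos h2, suspenseStep_singleton (e := closedSuspense 0) Even.zero,
      closedSuspense_eq_odd (m := 0) (by omega) (by omega)]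
    rfl
  obtain ⟨m, hm1, hm2⟩ := exists_mem_block hn
  rw [optValues_of_monotone closedSuspense_monotone h3]
  rcases le_or_gt n (7 * 2 ^ m - 5) with hodd | heven
  · rcases m with _ | m
    · norm_num at hodd
      omega
    rw [closedSuspense_image_of_odd hm1 hodd, suspenseStep_singleton (by simp [parity_simps]),
      closedSuspense_eq_odd hm1 hodd]
    ring
  · rw [suspenseStep_of_isGreatest (isGreatest_odd_closedSuspense_image_of_even (by omega) hm2),
      closedSuspense_eq_even (by omega) hm2]
    ring

theorem suspense_misere (S : ℕ → ℕ)
    (h0 : S 0 = 0)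
    (hodd : ∀ n, 1 ≤ n → (∃ v ∈ optValues S n, Odd v) →
      S n = 1 + sSup {v ∈ optValues S n | Odd v})
    (heven : ∀ n, 1 ≤ n → ¬ (∃ v ∈ optValues S n, Odd v) →
      S n = 1 + sInf {v ∈ optValues S n | Even v}) :
    Monotone S ∧ ∀ n : ℕ,
      S (7 * 2 ^ n - 6) = 2 * n + 1 ∧ S (7 * 2 ^ n - 5) = 2 * n + 1 ∧
      (∀ k, 7 * 2 ^ n - 4 ≤ k → k ≤ 7 * 2 ^ (n + 1) - 7 → S k = 2 * n + 2) := by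
  have hS : ∀ n, 1 ≤ n → S n = suspenseStep (optValues S n) := fun n hn => by
    unfold suspenseStep
    split_ifs with h
    exacts [hodd n hn h, heven n hn h]
  obtain rfl : S = closedSuspense :=
    eq_of_suspenseStep h0 hS fun _ => closedSuspense_eq_suspenseStep
  refine ⟨closedSuspense_monotone, fun n => ⟨?_, ?_, fun k => closedSuspense_eq_even⟩⟩
  all_goals
    have := Nat.one_le_two_pow (n := n)
    exact closedSuspense_eq_odd (by omega) (by omega)
end

section
/- Under misère play of selective compound Node-Kayles on a single path, P_n is a P-position if and only if n ≡ 1 or 2 (mod 7). -/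
/-- Some option of `P n` (for `n ≥ 3`) consists only of paths satisfying `L`. -/
def HasOptionWithin (L : ℕ → Prop) (n : ℕ) : Prop :=
  L (n - 2) ∨ L (n - 3) ∨ ∃ i j : ℕ, 1 ≤ i ∧ i ≤ j ∧ i + j = n - 3 ∧ L i ∧ L j

lemma hasOptionWithin_congr {L L' : ℕ → Prop} {n : ℕ} (hn : 3 ≤ n)
    (h : ∀ m < n, L m ↔ L' m) : HasOptionWithin L n ↔ HasOptionWithin L' n := by
  unfold HasOptionWithin
  rw [h (n - 2) (by omega), h (n - 3) (by omega)]
  refine or_congr_right <| or_congr_right <| exists₂_congr fun i j =>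
    and_congr_right fun _ => and_congr_right fun _ => and_congr_right fun _ => ?_
  rw [h i (by omega), h j (by omega)]

lemma hasOptionWithin_mod_seven {n : ℕ} (hn : 3 ≤ n) :
    HasOptionWithin (fun m => m % 7 = 1 ∨ m % 7 = 2) n ↔ ¬(n % 7 = 1 ∨ n % 7 = 2) := by
  constructor
  · rintro (h | h | ⟨i, j, -, -, hij, hi, hj⟩) <;> omega
  · intro hn7
    have : n % 7 = 0 ∨ n % 7 = 3 ∨ n % 7 = 4 ∨ n % 7 = 5 ∨ n % 7 = 6 := by omega
    rcases this with h | h | h | h | h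
    · exact Or.inr <| Or.inr ⟨2, n - 5, by omega, by omega, by omega, by omega, by omega⟩
    · exact Or.inl (by omega)
    · exact Or.inl (by omega)
    · exact Or.inr <| Or.inl (by omega)
    · exact Or.inr <| Or.inr ⟨1, n - 4, le_rfl, by omega, by omega, by omega, by omega⟩

lemma optValues_of_le_two (f : ℕ → ℕ) {n : ℕ} (hn : n ≤ 2) : optValues f n = {f 0} := by
  rw [optValues, if_pos hn]

lemma optValues_nonempty (f : ℕ → ℕ) (n : ℕ) : (optValues f n).Nonempty := by
  unfold optValues
  split_ifs
  · exact Set.singleton_nonempty _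
  · exact ⟨f (n - 2), Or.inl (Set.mem_insert _ _)⟩

lemma zero_mem_optValues_iff (f : ℕ → ℕ) {n : ℕ} (hn : 3 ≤ n) :
    0 ∈ optValues f n ↔ HasOptionWithin (fun m => f m = 0) n := by
  simp only [optValues, if_neg (show ¬n ≤ 2 by omega), HasOptionWithin, Set.mem_union,
    Set.mem_insert_iff, Set.mem_singleton_iff, Set.mem_ofPred_eq, eq_comm (a := 0),
    ← Nat.max_eq_zero_iff, or_assoc]

lemma Nat.one_sub_sInf_eq_zero_iff {S : Set ℕ} (hS : S.Nonempty) : 1 - sInf S = 0 ↔ 0 ∉ S := by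
  rw [Nat.sub_eq_zero_iff_le, Nat.one_le_iff_ne_zero, Ne, Nat.sInf_eq_zero,
    or_iff_left hS.ne_empty]

theorem selective_misere_losing_general (σ : ℕ → ℕ) (h0 : σ 0 = 1)
    (hrec : ∀ n, 1 ≤ n → σ n = 1 - sInf (optValues σ n)) :
    ∀ n : ℕ, σ n = 0 ↔ n % 7 = 1 ∨ n % 7 = 2 := by
  intro n
  induction n using Nat.strong_induction_on with
  | _ n ih =>
  rcases Nat.eq_zero_or_pos n with rfl | hn
  · simp [h0]
  rw [hrec n hn, Nat.one_sub_sInf_eq_zero_iff (optValues_nonempty σ n)]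
  rcases Nat.lt_or_ge n 3 with hn3 | hn3
  · rw [optValues_of_le_two σ (by omega), Set.mem_singleton_iff, h0]
    omega
  · rw [zero_mem_optValues_iff σ hn3, hasOptionWithin_congr hn3 ih,
      hasOptionWithin_mod_seven hn3, not_not]

theorem selective_misere_losing (σ : ℕ → ℕ) (hb : ∀ n, σ n ≤ 1) (h0 : σ 0 = 1)
    (hrec : ∀ n, 1 ≤ n → σ n = 1 - sInf (optValues σ n)) :
    ∀ n : ℕ, σ n = 0 ↔ n % 7 = 1 ∨ n % 7 = 2 :=
  selective_misere_losing_general σ h0 hrec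
end
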